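/- Let H be the discrete Heisenberg group with generators x = (1,0,0), y = (0,0,1), z = (0,1,0), and let φ be the endomorphism φ(a,b,c) = (2a, 4b, 2c). Then the growth rate of φ restricted to the center Z = {(0,b,0) : b ∈ ℤ} (with generating set {z}) equals 4, while GR(φ on H) ≤ 2; in particular GR(φ on H) < GR(φ on Z). -/

import Mathlib

/-- The discrete Heisenberg group: triples `(a, b, c)` of integers with
`(a,b,c)(p,q,r) = (a+p, b+q+a*r, c+r)`. -/
@[ext]
structure Heis where
  a : ℤ
  b : ℤ
  c : ℤ
deriving DecidableEq

namespace Heis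

instance : Mul Heis := ⟨fun x y => ⟨x.a + y.a, x.b + y.b + x.a * y.c, x.c + y.c⟩⟩
instance : One Heis := ⟨⟨0, 0, 0⟩⟩
instance : Inv Heis := ⟨fun x => ⟨-x.a, x.a * x.c - x.b, -x.c⟩⟩

@[simp] lemma mul_a (x y : Heis) : (x * y).a = x.a + y.a := rfl
@[simp] lemma mul_b (x y : Heis) : (x * y).b = x.b + y.b + x.a * y.c := rfl
@[simp] lemma mul_c (x y : Heis) : (x * y).c = x.c + y.c := rfl
@[simp] lemma one_a : (1 : Heis).a = 0 := rfl
@[simp] lemma one_b : (1 : Heis).b = 0 := rfl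
@[simp] lemma one_c : (1 : Heis).c = 0 := rfl
@[simp] lemma inv_a (x : Heis) : x⁻¹.a = -x.a := rfl
@[simp] lemma inv_b (x : Heis) : x⁻¹.b = x.a * x.c - x.b := rfl
@[simp] lemma inv_c (x : Heis) : x⁻¹.c = -x.c := rfl

instance : Group Heis where
  mul_assoc x y z := by ext <;> simp <;> ring
  one_mul x := by ext <;> simp
  mul_one x := by ext <;> simp
  inv_mul_cancel x := by ext <;> simp

end Heis

open Filter

/-- Word length of `g` with respect to `S ∪ S⁻¹`. -/
noncomputable def wordLength {G : Type*} [Group G] (S : Set G) (g : G) : ℕ :=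
  sInf {n | ∃ l : List G, l.length = n ∧ (∀ x ∈ l, x ∈ S ∨ x⁻¹ ∈ S) ∧ l.prod = g}

/-- The endomorphism `(a,b,c) ↦ (2a, 4b, 2c)` of the Heisenberg group. -/
def φ : Heis → Heis := fun g => ⟨2 * g.a, 4 * g.b, 2 * g.c⟩

/-- Generators of the Heisenberg group. -/
def x : Heis := ⟨1, 0, 0⟩
def y : Heis := ⟨0, 0, 1⟩
def z : Heis := ⟨0, 1, 0⟩

/-!
`φ` doubles `x` and `y`, so `φ^[m] x = x ^ 2 ^ m` and `φ^[m] y = y ^ 2 ^ m` have word length at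
most `2 ^ m`, whereas `φ^[m] z = (0, 4 ^ m, 0)` is the commutator `⁅x ^ 2 ^ m, y ^ 2 ^ m⁆` and so has
word length at most `4 * 2 ^ m` in `H`. Hence the growth rate on `H` is at most
`lim (4 * 2 ^ m) ^ (1 / m) = 2`, while in `Z = ⟨z⟩` the length of `φ^[m] z` is exactly `4 ^ m`.
-/

open scoped commutatorElement

section WordLength

variable {G : Type*} [Group G] {S : Set G}

lemma wordLength_le_length (l : List G) (hl : ∀ u ∈ l, u ∈ S ∨ u⁻¹ ∈ S) :
    wordLength S l.prod ≤ l.length :=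
  Nat.sInf_le ⟨l, rfl, hl, rfl⟩

lemma forall_mem_replicate_mem_or_inv_mem {s : G} (hs : s ∈ S ∨ s⁻¹ ∈ S) (n : ℕ) :
    ∀ u ∈ List.replicate n s, u ∈ S ∨ u⁻¹ ∈ S := by
  intro u hu
  rwa [List.eq_of_mem_replicate hu]

lemma wordLength_pow_le {s : G} (hs : s ∈ S) (n : ℕ) : wordLength S (s ^ n) ≤ n := by
  simpa using wordLength_le_length _ (forall_mem_replicate_mem_or_inv_mem (.inl hs) n)

lemma wordLength_commutatorElement_pow_le {s t : G} (hs : s ∈ S) (ht : t ∈ S) (n : ℕ) :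
    wordLength S ⁅s ^ n, t ^ n⁆ ≤ 4 * n := by
  have hmem : ∀ u ∈ List.replicate n s ++ List.replicate n t ++ List.replicate n s⁻¹ ++
      List.replicate n t⁻¹, u ∈ S ∨ u⁻¹ ∈ S := by
    simp only [List.mem_append]
    rintro u (((hu | hu) | hu) | hu) <;> refine forall_mem_replicate_mem_or_inv_mem ?_ n u hu
    exacts [.inl hs, .inl ht, .inr (by rwa [inv_inv]), .inr (by rwa [inv_inv])]
  have := wordLength_le_length _ hmem
  simp only [List.prod_append, List.prod_replicate, List.length_append,
    List.length_replicate, inv_pow, ← commutatorElement_def] at this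
  omega

end WordLength

lemma tendsto_pow_rpow_one_div {a : ℝ} (ha : 0 ≤ a) :
    Tendsto (fun m : ℕ => (a ^ m) ^ (1 / (m : ℝ))) atTop (nhds a) := by
  refine tendsto_const_nhds.congr' ?_
  filter_upwards [eventually_ne_atTop 0] with m hm
  rw [one_div, Real.pow_rpow_inv_natCast ha hm]

lemma tendsto_const_mul_pow_rpow_one_div {c a : ℝ} (hc : 0 < c) (ha : 0 ≤ a) :
    Tendsto (fun m : ℕ => (c * a ^ m) ^ (1 / (m : ℝ))) atTop (nhds a) := by
  have hc_root : Tendsto (fun m : ℕ => c ^ (1 / (m : ℝ))) atTop (nhds 1) := by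
    simpa [Function.comp_def] using (Real.continuousAt_const_rpow hc.ne').tendsto.comp
      tendsto_one_div_atTop_nhds_zero_nat
  simpa only [Real.mul_rpow hc.le (pow_nonneg ha _), one_mul] using
    hc_root.mul (tendsto_pow_rpow_one_div ha)

namespace Heis

lemma iterate_φ (n : ℕ) (g : Heis) : φ^[n] g = ⟨2 ^ n * g.a, 4 ^ n * g.b, 2 ^ n * g.c⟩ := by
  induction n generalizing g with
  | zero => simp
  | succ n ih =>
    rw [Function.iterate_succ_apply, ih]
    ext <;> simp only [φ, pow_succ] <;> ring

lemma x_pow (n : ℕ) : x ^ n = ⟨n, 0, 0⟩ := by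
  induction n with
  | zero => rfl
  | succ n ih => rw [pow_succ, ih]; ext <;> simp [x]

lemma y_pow (n : ℕ) : y ^ n = ⟨0, 0, n⟩ := by
  induction n with
  | zero => rfl
  | succ n ih => rw [pow_succ, ih]; ext <;> simp [y]

lemma commutatorElement_x_pow_y_pow (n : ℕ) : ⁅x ^ n, y ^ n⁆ = ⟨0, n * n, 0⟩ := by
  ext <;> simp [commutatorElement_def, x_pow, y_pow]

lemma iterate_φ_x (m : ℕ) : φ^[m] x = x ^ 2 ^ m := by
  rw [iterate_φ, x_pow]; ext <;> simp [x]

lemma iterate_φ_y (m : ℕ) : φ^[m] y = y ^ 2 ^ m := by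
  rw [iterate_φ, y_pow]; ext <;> simp [y]

lemma iterate_φ_z (m : ℕ) : φ^[m] z = ⁅x ^ 2 ^ m, y ^ 2 ^ m⁆ := by
  rw [iterate_φ, commutatorElement_x_pow_y_pow]
  ext <;> simp [z, ← mul_pow]

lemma natAbs_iterate_φ_z_b (m : ℕ) : (φ^[m] z).b.natAbs = 4 ^ m := by
  simp [iterate_φ, z, Int.natAbs_pow]

lemma wordLength_iterate_φ_le {g : Heis} (hg : g ∈ ({x, y, z} : Set Heis)) (m : ℕ) :
    wordLength {x, y, z} (φ^[m] g) ≤ 4 * 2 ^ m := by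
  have hx : x ∈ ({x, y, z} : Set Heis) := by simp
  have hy : y ∈ ({x, y, z} : Set Heis) := by simp
  rcases hg with rfl | rfl | rfl
  · rw [iterate_φ_x]; linarith [wordLength_pow_le hx (2 ^ m)]
  · rw [iterate_φ_y]; linarith [wordLength_pow_le hy (2 ^ m)]
  · rw [iterate_φ_z]; exact wordLength_commutatorElement_pow_le hx hy _

end Heis

theorem heisenberg_growth_rates (L : ℝ)
    (hL : Tendsto
      (fun m : ℕ =>
        ((max (wordLength {x, y, z} (φ^[m] x))
            (max (wordLength {x, y, z} (φ^[m] y)) (wordLength {x, y, z} (φ^[m] z))) : ℕ) : ℝ) ^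
          (1 / (m : ℝ)))
      atTop (nhds L)) :
    Tendsto (fun n : ℕ => (((φ^[n] z).b.natAbs : ℕ) : ℝ) ^ (1 / (n : ℝ))) atTop (nhds 4) ∧
      L ≤ 2 ∧ L < 4 := by
  have hcentre : Tendsto (fun n : ℕ => (((φ^[n] z).b.natAbs : ℕ) : ℝ) ^ (1 / (n : ℝ)))
      atTop (nhds 4) := by
    simpa only [Heis.natAbs_iterate_φ_z_b, Nat.cast_pow, Nat.cast_ofNat] using
      tendsto_pow_rpow_one_div (a := (4 : ℝ)) (by norm_num)
  have hL2 : L ≤ 2 := by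
    refine le_of_tendsto_of_tendsto' hL
      (tendsto_const_mul_pow_rpow_one_div (c := 4) (a := 2) (by norm_num) (by norm_num))
      fun m => Real.rpow_le_rpow (by positivity) ?_ (by positivity)
    have hmax := max_le (Heis.wordLength_iterate_φ_le (g := x) (by simp) m)
      (max_le (Heis.wordLength_iterate_φ_le (g := y) (by simp) m)
        (Heis.wordLength_iterate_φ_le (g := z) (by simp) m))
    exact_mod_cast hmax
  exact ⟨hcentre, hL2, by linarith⟩
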